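/- Let G be a finite abelian group of odd order n \ge 3 (so z = |{g : g^2 = e}| = 1 and D(G) is non-abelian), and let \Gamma be the commuting graph of D(G). Let s_i denote the number of resolving sets of \Gamma of cardinality i. Then s_{2n-3} = n(n-1), s_{2n-2} = n^2 + n - 1, s_{2n-1} = 2n, and s_{2n} = 1; equivalently, the resolving polynomial of \Gamma is \beta(\Gamma, x) = x^{2n-3}(x^3 + 2n x^2 + (n^2 + n - 1)x + n(n-1)). -/

import Mathlib

/-- The generalized dihedral group `D(G) = G ⋊ C₂`, with `⟨g, false⟩`
representing `(g, 1)` and `⟨g, true⟩` representing `(g, -1)`.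
Multiplication is `(g₁, c₁)(g₂, c₂) = (g₁ g₂^{c₁}, c₁ c₂)`, i.e. `-1` acts by inversion. -/
@[ext]
structure GenDihedral (G : Type) where
  g : G
  b : Bool
  deriving DecidableEq

namespace GenDihedral

variable {G : Type} [CommGroup G]

instance : Mul (GenDihedral G) :=
  ⟨fun a c => ⟨a.g * (if a.b then c.g⁻¹ else c.g), xor a.b c.b⟩⟩

instance : One (GenDihedral G) := ⟨⟨1, false⟩⟩

instance : Inv (GenDihedral G) := ⟨fun a => ⟨if a.b then a.g else a.g⁻¹, a.b⟩⟩

theorem mul_def (a c : GenDihedral G) :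
    a * c = ⟨a.g * (if a.b then c.g⁻¹ else c.g), xor a.b c.b⟩ := rfl

theorem one_def : (1 : GenDihedral G) = ⟨1, false⟩ := rfl

theorem inv_def (a : GenDihedral G) : a⁻¹ = ⟨if a.b then a.g else a.g⁻¹, a.b⟩ := rfl

instance : Group (GenDihedral G) where
  mul_assoc a c d := by
    obtain ⟨g₁, b₁⟩ := a; obtain ⟨g₂, b₂⟩ := c; obtain ⟨g₃, b₃⟩ := d
    cases b₁ <;> cases b₂ <;> cases b₃ <;>
      simp [mul_def, mul_assoc, mul_comm, mul_left_comm, mul_inv, inv_inv]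
  one_mul a := by obtain ⟨g, b⟩ := a; cases b <;> simp [mul_def, one_def]
  mul_one a := by obtain ⟨g, b⟩ := a; cases b <;> simp [mul_def, one_def]
  inv_mul_cancel a := by
    obtain ⟨g, b⟩ := a; cases b <;> simp [mul_def, one_def, inv_def]

instance [Fintype G] : Fintype (GenDihedral G) :=
  Fintype.ofEquiv (G × Bool)
    ⟨fun p => ⟨p.1, p.2⟩, fun x => (x.g, x.b), fun _ => rfl, fun _ => rfl⟩

instance [DecidableEq G] (a c : GenDihedral G) : Decidable (Commute a c) :=
  decidable_of_iff (a * c = c * a) Iff.rfl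

end GenDihedral

namespace GenDihedral

/-- The commuting graph of `D(G)`: vertices are the elements of `D(G)`, and two
distinct vertices are adjacent iff they commute. -/
def commGraph (G : Type) [CommGroup G] : SimpleGraph (GenDihedral G) where
  Adj u v := u ≠ v ∧ u * v = v * u
  symm := ⟨fun _ _ h => ⟨h.1.symm, h.2.symm⟩⟩
  loopless := ⟨fun _ h => h.1 rfl⟩

instance {G : Type} [CommGroup G] [DecidableEq G] : DecidableRel (commGraph G).Adj :=
  fun _ _ => instDecidableAnd

end GenDihedral

/-- `W` is a resolving set of `Γ` if every pair of distinct vertices is distinguished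
by its vector of graph distances to the vertices of `W`. -/
def IsResolvingSet {V : Type} (Γ : SimpleGraph V) (W : Set V) : Prop :=
  ∀ u v : V, u ≠ v → ∃ w ∈ W, Γ.dist u w ≠ Γ.dist v w

/-- The metric dimension of `Γ`: the minimum cardinality of a resolving set. -/
noncomputable def metricDim {V : Type} (Γ : SimpleGraph V) : ℕ :=
  sInf {k : ℕ | ∃ W : Finset V, IsResolvingSet Γ ↑W ∧ W.card = k}

/-- The number `sᵢ` of resolving sets of `Γ` of cardinality `i` (the coefficient of `xⁱ`
in the resolving polynomial `β(Γ, x) = Σᵢ sᵢ xⁱ`). -/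
noncomputable def numResolvingSets {V : Type} (Γ : SimpleGraph V) (i : ℕ) : ℕ :=
  Set.ncard {W : Finset V | IsResolvingSet Γ ↑W ∧ W.card = i}

/-!
In `D(G)` with `|G|` odd, `u` and `v` commute iff both are rotations, one of them is `1`, or
`u = v`. So every vertex is adjacent to `1`, distances in `Γ` are `0`, `1` or `2`, and a vertex
`w` sees two non-identity rotations, or two reflections, at the same distance unless `w` is one
of them. A resolving set must therefore contain all non-identity rotations but at most one, and
all reflections but at most one. Conversely, for `n ≥ 3` such a set contains a rotation `r ≠ 1`
and a reflection `f`, and the distances to `r` and `f` already separate `1`, the rotations and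
the reflections outside it. A resolving set is thus determined by whether it omits `1`, which
non-identity rotation it omits (`n - 1` choices, or none) and which reflection (`n` choices, or
none), so `s_{2n-j}` is the coefficient of `x^j` in `(1 + x)(1 + (n - 1)x)(1 + nx)`.
-/

open Finset

lemma eq_one_of_sq_eq_one_of_odd_card {G : Type} [Group G] (h : Odd (Nat.card G)) {g : G}
    (hg : g ^ 2 = 1) : g = 1 :=
  (powCoprime (Nat.coprime_two_right.mpr h)).injective (by simp [powCoprime, hg])

lemma Option.exists_forall_iff_eq_some {α : Type*} {p : α → Prop}
    (hp : ∀ a a', p a → p a' → a = a') : ∃ o : Option α, ∀ a, p a ↔ o = some a := by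
  by_cases h : ∃ a, p a
  · obtain ⟨a, ha⟩ := h
    exact ⟨some a, fun a' => ⟨fun ha' => by rw [hp a a' ha ha'], by rintro ⟨⟩; exact ha⟩⟩
  · exact ⟨none, fun a => by simpa using fun ha => h ⟨a, ha⟩⟩

namespace GenDihedral

section Distance

variable {G : Type} [CommGroup G]

@[simp] lemma one_g : (1 : GenDihedral G).g = 1 := rfl

@[simp] lemma one_b : (1 : GenDihedral G).b = false := rfl

lemma eq_one_iff {x : GenDihedral G} : x = 1 ↔ x.b = false ∧ x.g = 1 := by
  rw [GenDihedral.ext_iff, one_g, one_b, and_comm]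

lemma commute_iff (hG : ∀ g : G, g ^ 2 = 1 → g = 1) {u v : GenDihedral G} :
    Commute u v ↔ (u.b = false ∧ v.b = false) ∨ u = 1 ∨ v = 1 ∨ u = v := by
  have inv_eq_self {a : G} : a⁻¹ = a ↔ a = 1 :=
    ⟨fun h => hG a (by rw [sq]; nth_rw 1 [← h]; exact inv_mul_cancel a), fun h => by simp [h]⟩
  obtain ⟨x, _ | _⟩ := u <;> obtain ⟨y, _ | _⟩ := v <;>
    simp only [Commute, SemiconjBy, mul_def, GenDihedral.ext_iff, one_g, one_b] <;> simp
  · exact mul_comm x y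
  · rw [mul_comm x, mul_right_inj, eq_comm, inv_eq_self]
  · rw [mul_comm y, mul_right_inj, inv_eq_self]
  · rw [← mul_inv_eq_one (a := x), ← inv_eq_self, mul_inv_rev, inv_inv, mul_comm, eq_comm]

lemma dist_commGraph [DecidableEq G] (u v : GenDihedral G) :
    (commGraph G).dist u v = if u = v then 0 else if Commute u v then 1 else 2 := by
  have adj_one {w : GenDihedral G} (hw : w ≠ 1) : (commGraph G).Adj w 1 :=
    ⟨hw, by rw [one_mul, mul_one]⟩
  split_ifs with huv hc
  · rw [huv, SimpleGraph.dist_self]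
  · exact SimpleGraph.dist_eq_one_iff_adj.mpr ⟨huv, hc⟩
  · have hu : u ≠ 1 := by rintro rfl; exact hc (Commute.one_left v)
    have hv : v ≠ 1 := by rintro rfl; exact hc (Commute.one_right u)
    let p := (adj_one hu).toWalk.append (adj_one hv).symm.toWalk
    have hle : (commGraph G).dist u v ≤ 2 := SimpleGraph.dist_le p
    have hpos := SimpleGraph.Reachable.pos_dist_of_ne ⟨p⟩ huv
    have hne : (commGraph G).dist u v ≠ 1 := fun h => hc (SimpleGraph.dist_eq_one_iff_adj.mp h).2
    omega

lemma dist_commGraph_ne_zero {u v : GenDihedral G} (huv : u ≠ v) : (commGraph G).dist u v ≠ 0 := by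
  classical
  rw [dist_commGraph, if_neg huv]
  split_ifs <;> omega

lemma commute_iff_of_dist_eq {u v w : GenDihedral G} (hu : u ≠ w) (hv : v ≠ w)
    (h : (commGraph G).dist u w = (commGraph G).dist v w) : Commute u w ↔ Commute v w := by
  classical
  rw [dist_commGraph, dist_commGraph, if_neg hu, if_neg hv] at h
  split_ifs at h with hcu hcv hcv <;> simp_all

def AreTwins (u v : GenDihedral G) : Prop :=
  u ≠ v ∧ u ≠ 1 ∧ v ≠ 1 ∧ u.b = v.b

lemma dist_eq_of_areTwins (hG : ∀ g : G, g ^ 2 = 1 → g = 1) {u v w : GenDihedral G}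
    (huv : AreTwins u v) (hwu : w ≠ u) (hwv : w ≠ v) :
    (commGraph G).dist u w = (commGraph G).dist v w := by
  classical
  obtain ⟨-, hu, hv, hb⟩ := huv
  simp [dist_commGraph, commute_iff hG, hu, hv, hb, hwu.symm, hwv.symm]

lemma mem_or_mem_of_isResolvingSet (hG : ∀ g : G, g ^ 2 = 1 → g = 1) {W : Set (GenDihedral G)}
    (hW : IsResolvingSet (commGraph G) W) {u v : GenDihedral G} (huv : AreTwins u v) :
    u ∈ W ∨ v ∈ W := by
  by_contra! h
  obtain ⟨w, hw, hne⟩ := hW u v huv.1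
  exact hne (dist_eq_of_areTwins hG huv (ne_of_mem_of_not_mem hw h.1)
    (ne_of_mem_of_not_mem hw h.2))

variable [Fintype G] {W : Set (GenDihedral G)}

lemma exists_rotation_mem (h3 : 3 ≤ Fintype.card G)
    (hW : ∀ u v, AreTwins u v → u ∈ W ∨ v ∈ W) : ∃ r ∈ W, r.b = false ∧ r ≠ 1 := by
  classical
  obtain ⟨g₁, hg₁⟩ := Fintype.exists_ne_of_one_lt_card (by omega) (1 : G)
  obtain ⟨g₂, hg₂, hg₂₁⟩ := (univ.erase (1 : G)).exists_mem_ne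
    (by rw [card_erase_of_mem (mem_univ _), card_univ]; omega) g₁
  have hg₂ : g₂ ≠ 1 := ne_of_mem_erase hg₂
  rcases hW ⟨g₁, false⟩ ⟨g₂, false⟩ ⟨by simp [hg₂₁.symm], by simp [eq_one_iff, hg₁],
    by simp [eq_one_iff, hg₂], rfl⟩ with h | h
  · exact ⟨_, h, rfl, by simp [eq_one_iff, hg₁]⟩
  · exact ⟨_, h, rfl, by simp [eq_one_iff, hg₂]⟩

lemma exists_reflection_mem (h2 : 2 ≤ Fintype.card G)
    (hW : ∀ u v, AreTwins u v → u ∈ W ∨ v ∈ W) : ∃ f ∈ W, f.b = true := by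
  obtain ⟨g₁, g₂, hne⟩ := Fintype.one_lt_card_iff.mp (by omega : 1 < Fintype.card G)
  rcases hW ⟨g₁, true⟩ ⟨g₂, true⟩ ⟨by simp [hne], by simp [eq_one_iff], by simp [eq_one_iff], rfl⟩
    with h | h <;> exact ⟨_, h, rfl⟩

lemma isResolvingSet_of_forall_areTwins (hG : ∀ g : G, g ^ 2 = 1 → g = 1)
    (h3 : 3 ≤ Fintype.card G) (hW : ∀ u v, AreTwins u v → u ∈ W ∨ v ∈ W) :
    IsResolvingSet (commGraph G) W := by
  intro u v huv
  obtain ⟨r, hrW, hrb, hr1⟩ := exists_rotation_mem h3 hW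
  obtain ⟨f, hfW, hfb⟩ := exists_reflection_mem (by omega) hW
  have hf1 : f ≠ 1 := by simp [eq_one_iff, hfb]
  by_contra! h
  have hu : u ∉ W := fun hu =>
    dist_commGraph_ne_zero huv.symm (by rw [← h u hu, SimpleGraph.dist_self])
  have hv : v ∉ W := fun hv =>
    dist_commGraph_ne_zero huv (by rw [h v hv, SimpleGraph.dist_self])
  have hur := ne_of_mem_of_not_mem hrW hu
  have hvr := ne_of_mem_of_not_mem hrW hv
  have huf := ne_of_mem_of_not_mem hfW hu
  have hvf := ne_of_mem_of_not_mem hfW hv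
  -- commuting with `r` detects the rotations, commuting with `f` detects `1`
  have hcr := commute_iff_of_dist_eq hur.symm hvr.symm (h r hrW)
  have hcf := commute_iff_of_dist_eq huf.symm hvf.symm (h f hfW)
  simp only [commute_iff hG, hrb, hr1, hf1, hfb, hur.symm, hvr.symm, huf.symm, hvf.symm,
    and_true, and_false, false_or, or_false, Bool.true_eq_false] at hcr hcf
  by_cases hu1 : u = 1
  · exact huv (hu1.trans (hcf.mp hu1).symm)
  have hv1 : v ≠ 1 := fun hv1 => hu1 (hcf.mpr hv1)
  rcases hW u v ⟨huv, hu1, hv1, by simpa [hu1, hv1] using hcr⟩ with h | h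
  exacts [hu h, hv h]

lemma isResolvingSet_iff (hG : ∀ g : G, g ^ 2 = 1 → g = 1) (h3 : 3 ≤ Fintype.card G) :
    IsResolvingSet (commGraph G) W ↔ ∀ u v, AreTwins u v → u ∈ W ∨ v ∈ W :=
  ⟨fun hW _ _ => mem_or_mem_of_isResolvingSet hG hW, isResolvingSet_of_forall_areTwins hG h3⟩

end Distance

lemma card_genDihedral {G : Type} [Fintype G] :
    Fintype.card (GenDihedral G) = 2 * Fintype.card G := by
  rw [Fintype.card_congr ⟨fun x => (x.g, x.b), fun p => ⟨p.1, p.2⟩, fun _ => rfl, fun _ => rfl⟩,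
    Fintype.card_prod, Fintype.card_bool, mul_comm]

section Counting

variable {G : Type} [CommGroup G] [DecidableEq G]

abbrev Omission (G : Type) [One G] : Type := Bool × Option {g : G // g ≠ 1} × Option G

/-- The complements of the resolving sets, see `exists_compl_omitted_eq_iff`. -/
def omitted : Omission G → Finset (GenDihedral G)
  | (b, r, f) => (if b then {1} else ∅) ∪ (r.map fun g => ⟨g.1, false⟩).toFinset ∪
      (f.map fun g => ⟨g, true⟩).toFinset

lemma card_omitted (b : Bool) (r : Option {g : G // g ≠ 1}) (f : Option G) :
    #(omitted (b, r, f)) = b.toNat + r.elim 0 1 + f.elim 0 1 := by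
  rcases r with _ | ⟨g, hg⟩ <;> cases b <;> cases f <;>
    simp_all [omitted, card_insert_of_notMem, GenDihedral.ext_iff, eq_comm (a := (1 : G))]

variable {b : Bool} {r : Option {g : G // g ≠ 1}} {f : Option G}

@[simp] lemma one_mem_omitted : 1 ∈ omitted (b, r, f) ↔ b = true := by
  cases b <;> simp [omitted, GenDihedral.ext_iff]

@[simp] lemma mk_false_mem_omitted {g : G} (hg : g ≠ 1) :
    ⟨g, false⟩ ∈ omitted (b, r, f) ↔ r = some ⟨g, hg⟩ := by
  cases b <;> simp [omitted, GenDihedral.ext_iff, hg]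

@[simp] lemma mk_true_mem_omitted {g : G} : ⟨g, true⟩ ∈ omitted (b, r, f) ↔ f = some g := by
  cases b <;> simp [omitted, GenDihedral.ext_iff]

lemma omitted_injective : Function.Injective (omitted (G := G)) := by
  rintro ⟨b, r, f⟩ ⟨b', r', f'⟩ h
  have hb : b = b' := by simpa using congrArg (1 ∈ ·) h
  have hr : r = r' := Option.ext fun g => by
    simpa only [mk_false_mem_omitted g.2, eq_iff_iff] using congrArg (⟨g.1, false⟩ ∈ ·) h
  have hf : f = f' := Option.ext fun g => by
    simpa only [mk_true_mem_omitted, eq_iff_iff] using congrArg (⟨g, true⟩ ∈ ·) h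
  rw [hb, hr, hf]

variable [Fintype G]

lemma exists_compl_omitted_eq_iff {W : Finset (GenDihedral G)} :
    (∃ m, (omitted m)ᶜ = W) ↔ ∀ u v, AreTwins u v → u ∈ W ∨ v ∈ W := by
  simp only [compl_eq_comm (x := omitted _)]
  constructor
  · rintro ⟨⟨b, r, f⟩, hm⟩ ⟨g, c⟩ ⟨g', c'⟩ ⟨huv, hu1, hv1, (rfl : c = c')⟩
    by_contra! h
    simp only [← mem_compl, hm] at h
    cases c
    · have hg : g ≠ 1 := by simpa [eq_one_iff] using hu1
      have hg' : g' ≠ 1 := by simpa [eq_one_iff] using hv1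
      rw [mk_false_mem_omitted hg, mk_false_mem_omitted hg'] at h
      exact huv (by simpa using h.1.symm.trans h.2)
    · rw [mk_true_mem_omitted, mk_true_mem_omitted] at h
      exact huv (by simpa using h.1.symm.trans h.2)
  · intro hW
    have unique {u v : GenDihedral G} (hu : u ∉ W) (hv : v ∉ W) (hu1 : u ≠ 1) (hv1 : v ≠ 1)
        (hb : u.b = v.b) : u = v := by
      by_contra huv
      rcases hW u v ⟨huv, hu1, hv1, hb⟩ with h | h
      exacts [hu h, hv h]
    obtain ⟨r, hr⟩ := Option.exists_forall_iff_eq_some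
      (p := fun g : {g : G // g ≠ 1} => (⟨g, false⟩ : GenDihedral G) ∉ W)
      fun a a' ha ha' => Subtype.ext <| by
        simpa using unique ha ha' (by simp [eq_one_iff, a.2]) (by simp [eq_one_iff, a'.2]) rfl
    obtain ⟨f, hf⟩ := Option.exists_forall_iff_eq_some
      (p := fun g : G => (⟨g, true⟩ : GenDihedral G) ∉ W)
      fun a a' ha ha' => by
        simpa using unique ha ha' (by simp [eq_one_iff]) (by simp [eq_one_iff]) rfl
    refine ⟨(decide (1 ∉ W), r, f), ?_⟩
    ext ⟨g, _ | _⟩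
    · by_cases hg : g = 1
      · subst hg
        exact mem_compl.trans (decide_eq_true_iff.symm.trans one_mem_omitted.symm)
      · rw [mk_false_mem_omitted hg, mem_compl, hr ⟨g, hg⟩]
    · rw [mk_true_mem_omitted, mem_compl, hf g]

lemma card_filter_card_omitted (j : ℕ) :
    #{m : Omission G | #(omitted m) = j} =
      ∑ b : Bool, ∑ r : Option {g : G // g ≠ 1}, ∑ f : Option G,
        if b.toNat + r.elim 0 1 + f.elim 0 1 = j then 1 else 0 := by
  simp only [card_filter, Fintype.sum_prod_type, card_omitted]

lemma numResolvingSets_commGraph (hG : ∀ g : G, g ^ 2 = 1 → g = 1) (h3 : 3 ≤ Fintype.card G)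
    {j : ℕ} (hj : j ≤ 2 * Fintype.card G) :
    numResolvingSets (commGraph G) (2 * Fintype.card G - j) =
      #{m : Omission G | #(omitted m) = j} := by
  have hset : {W : Finset (GenDihedral G) |
      IsResolvingSet (commGraph G) ↑W ∧ #W = 2 * Fintype.card G - j} =
      (compl ∘ omitted) '' {m : Omission G | #(omitted m) = j} := by
    ext W
    have hW : #Wᶜ + #W = 2 * Fintype.card G := by rw [card_compl_add_card, card_genDihedral]
    simp only [Set.mem_ofPred_eq, Set.mem_image, Function.comp_apply, isResolvingSet_iff hG h3,
      mem_coe, ← exists_compl_omitted_eq_iff]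
    constructor
    · rintro ⟨⟨m, rfl⟩, hcard⟩
      exact ⟨m, by rw [compl_compl] at hW; omega, rfl⟩
    · rintro ⟨m, hm, rfl⟩
      rw [compl_compl] at hW
      exact ⟨⟨m, rfl⟩, by omega⟩
  rw [numResolvingSets, hset,
    Set.ncard_image_of_injective _ (compl_injective.comp omitted_injective),
    Set.ncard_eq_toFinset_card', Set.toFinset_ofPred]

end Counting

end GenDihedral

open GenDihedral in
/-- For `G` of odd order `n ≥ 3` (so `z = 1` and `D(G)` is non-abelian), the numbers `sᵢ`
of resolving sets of cardinality `i` of the commuting graph `Γ` of `D(G)` satisfy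
`s_{2n-3} = n(n-1)`, `s_{2n-2} = n² + n - 1`, `s_{2n-1} = 2n`, `s_{2n} = 1`;
equivalently, `β(Γ, x) = x^{2n-3}(x³ + 2n x² + (n² + n - 1) x + n(n-1))`. -/
theorem stmt16 {G : Type} [CommGroup G] [Fintype G] [DecidableEq G]
    (n : ℕ) (hn : n = Fintype.card G) (hodd : Odd n) (hn3 : 3 ≤ n) :
    numResolvingSets (commGraph G) (2 * n - 3) = n * (n - 1) ∧
    numResolvingSets (commGraph G) (2 * n - 2) = n ^ 2 + n - 1 ∧
    numResolvingSets (commGraph G) (2 * n - 1) = 2 * n ∧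
    numResolvingSets (commGraph G) (2 * n) = 1 := by
  subst hn
  have hG : ∀ g : G, g ^ 2 = 1 → g = 1 := fun g =>
    eq_one_of_sq_eq_one_of_odd_card (Nat.card_eq_fintype_card (α := G) ▸ hodd)
  have count (j : ℕ) (hj : j ≤ 2 * Fintype.card G) := numResolvingSets_commGraph hG hn3 hj
  obtain ⟨k, hk⟩ : ∃ k, Fintype.card G = k + 1 := ⟨_, (Nat.succ_pred_eq_of_pos (by omega)).symm⟩
  refine ⟨?_, ?_, ?_, ?_⟩
  · rw [count 3 (by omega), card_filter_card_omitted]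
    simp [Fintype.sum_option, hk, -sum_boole]
    ring
  · rw [count 2 (by omega), card_filter_card_omitted]
    simp [Fintype.sum_option, hk, -sum_boole]
    ring
  · rw [count 1 (by omega), card_filter_card_omitted]
    simp [Fintype.sum_option, hk, -sum_boole]
    ring
  · rw [← Nat.sub_zero (2 * _), count 0 (by omega), card_filter_card_omitted]
    simp [Fintype.sum_option, -sum_boole]
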